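/- Let V_{h,0} be a finite-dimensional subspace of H¹₀(Ω), a(·,·) the coercive bounded bilinear form a(u,v) = ∫_Ω A∇u·∇v dx, and μ a finite Radon measure on Ω whose integration functional is well defined on V_{h,0}. Then u_h ∈ V_{h,0} solves the 'very weak' discrete scheme (u_h, v_h)_{L²} = ∫_Ω z_h(v_h) dμ for all v_h ∈ V_{h,0}, where z_h(v_h) ∈ V_{h,0} is defined by a(z_h(v_h), w_h) = (v_h, w_h)_{L²} for all w_h ∈ V_{h,0}, if and only if u_h solves the standard Galerkin scheme a(u_h, w_h) = ∫_Ω w_h dμ for all w_h ∈ V_{h,0}. -/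
import Mathlib


open Set

local notation "⟪" x ", " y "⟫" => @inner ℝ _ _ x y

/-- **Equivalence of Berggren's very weak FEM and the standard Galerkin
scheme.** Let `H` be a real inner product space (the `L²` pairing), `Vh` a
finite-dimensional subspace (the finite element space `V_{h,0}`), `a` a
symmetric bilinear form which is positive definite on `Vh`, `m` the
integration functional `v ↦ ∫_Ω v dμ`, and `zh : Vh → Vh` the discrete
solution operator defined by `a(zh v, w) = (v, w)` for all `w ∈ Vh`. Then
`uh ∈ Vh` solves the very weak scheme `(uh, v) = m (zh v)` for all `v ∈ Vh`
iff `uh` solves the Galerkin scheme `a(uh, w) = m w` for all `w ∈ Vh`. -/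
theorem berggren_scheme_equiv_galerkin
    {H : Type*} [NormedAddCommGroup H] [InnerProductSpace ℝ H]
    (Vh : Submodule ℝ H) [FiniteDimensional ℝ Vh]
    (a : H →ₗ[ℝ] H →ₗ[ℝ] ℝ)
    (hasymm : ∀ u v : H, a u v = a v u)
    (hapos : ∀ v : H, v ∈ Vh → v ≠ 0 → 0 < a v v)
    (m : H →ₗ[ℝ] ℝ)
    (zh : Vh → Vh)
    (hzh : ∀ v w : Vh, a (zh v : H) (w : H) = ⟪(v : H), (w : H)⟫)
    (uh : H) (huh : uh ∈ Vh) :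
    (∀ v : Vh, ⟪uh, (v : H)⟫ = m (zh v : H)) ↔
      (∀ w : Vh, a uh (w : H) = m (w : H)) := by
  -- Uniqueness: if `a y x = 0` for all `x ∈ Vh` and `y ∈ Vh`, then `y = 0`.
  have uniq : ∀ y : Vh, (∀ x : Vh, a (y : H) (x : H) = 0) → y = 0 := by
    intro y hy
    by_contra h
    have hy0 : (y : H) ≠ 0 := fun h0 => h (Subtype.ext h0)
    have hpos := hapos (y : H) y.2 hy0
    rw [hy y] at hpos
    exact lt_irrefl 0 hpos
  -- zh is additive and homogeneous.
  have hadd : ∀ v v' : Vh, zh (v + v') = zh v + zh v' := by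
    intro v v'
    have h0 := uniq (zh (v + v') - (zh v + zh v')) (by
      intro x
      have h1 := hzh (v + v') x
      have h2 := hzh v x
      have h3 := hzh v' x
      push_cast at h1 ⊢
      simp only [map_sub, map_add, LinearMap.sub_apply, LinearMap.add_apply]
      rw [h1, h2, h3, inner_add_left]
      ring)
    exact sub_eq_zero.mp h0
  have hsmul : ∀ (c : ℝ) (v : Vh), zh (c • v) = c • zh v := by
    intro c v
    have h0 := uniq (zh (c • v) - c • zh v) (by
      intro x
      have h1 := hzh (c • v) x
      have h2 := hzh v x
      push_cast at h1 ⊢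
      simp only [map_sub, map_smul, LinearMap.sub_apply, LinearMap.smul_apply]
      rw [h1, h2, inner_smul_left]
      simp [mul_comm])
    exact sub_eq_zero.mp h0
  -- zh as a linear map.
  let Z : Vh →ₗ[ℝ] Vh := { toFun := zh, map_add' := hadd, map_smul' := hsmul }
  have hinj : Function.Injective Z := by
    intro v v' hvv'
    have heq : ∀ x : Vh, ⟪(v : H), (x : H)⟫ = ⟪(v' : H), (x : H)⟫ := by
      intro x
      rw [← hzh v x, ← hzh v' x]
      simp only [Z] at hvv'
      rw [show zh v = zh v' from hvv']
    have : ⟪(v : H) - (v' : H), (v : H) - (v' : H)⟫ = (0 : ℝ) := by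
      rw [inner_sub_left, inner_sub_right, inner_sub_right]
      have h1 := heq v
      have h2 := heq v'
      linarith
    have h3 : (v : H) - (v' : H) = 0 := by
      have := inner_self_eq_zero.mp this
      exact this
    exact Subtype.ext (sub_eq_zero.mp h3)
  have hsurj : Function.Surjective zh := by
    have := (LinearMap.injective_iff_surjective (f := Z)).mp hinj
    exact this
  constructor
  · intro hvw w
    obtain ⟨v, hv⟩ := hsurj w
    have h1 := hvw v
    rw [hv] at h1
    rw [← h1]
    have h2 := hzh v ⟨uh, huh⟩
    rw [hv] at h2
    rw [hasymm uh (w : H), h2, real_inner_comm]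
  · intro hgal v
    have h1 := hgal (zh v)
    rw [← h1, hasymm uh ((zh v : Vh) : H), hzh v ⟨uh, huh⟩, real_inner_comm]
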